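/- arXiv:2004.02180 — 2 statements merged into one kernel-verified Lean document; each statement's English description precedes it below -/
import Mathlib

section
/- Let p ≤ n and let {A,B} be an (m,p,n)-GMP with GSVD as in the context, with generalized singular values (αᵢ, βᵢ). Then for every n−p+1 ≤ i ≤ n, max_{Ψ ∈ 𝕌_p} Re tr(Bᴴ Ψᴴ 𝒫_i Ψ B (AᴴA + BᴴB)^{-1}) = βᵢ² + β_{i+1}² + ⋯ + βₙ². -/
open Matrix BigOperators
open scoped ComplexOrder

/-!
Since `AᴴA + BᴴB = RᴴR` and `B = V Σ_B R`, the trace equals `tr(Wᴴ 𝒫_i W Σ_B Σ_Bᴴ)` with the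
unitary `W = Ψ V`, and `Σ_B Σ_Bᴴ = diag(β_{n-p+1}², …, β_n²)`. Writing that trace as
`∑ₖ sₖ β²_{n-p+k}` with `sₖ = ∑ⱼ (𝒫_i)ⱼⱼ |W_{jk}|²`, double stochasticity of `(|W_{jk}|²)` gives
`0 ≤ sₖ ≤ 1` and `∑ₖ sₖ = n - i + 1`; with `β` sorted, such a weighted sum is largest when the
weight sits on the `n - i + 1` largest values, which `W = 1` (i.e. `Ψ = Vᴴ`) achieves.
-/

open Finset

theorem sum_mul_le_sum_of_threshold {ι : Type*} [Fintype ι] [DecidableEq ι] {s d : ι → ℝ}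
    {T : Finset ι} {c : ℝ} (hs0 : ∀ k, 0 ≤ s k) (hs1 : ∀ k, s k ≤ 1) (hsum : ∑ k, s k = #T)
    (hdT : ∀ k ∈ T, c ≤ d k) (hdTc : ∀ k ∉ T, d k ≤ c) :
    ∑ k, s k * d k ≤ ∑ k ∈ T, d k := by
  have hmass : #T - ∑ k ∈ T, s k = ∑ k ∈ Tᶜ, s k := by
    linarith [sum_add_sum_compl T s]
  have hT : 0 ≤ ∑ k ∈ T, (1 - s k) * (d k - c) :=
    sum_nonneg fun k hk => mul_nonneg (by linarith [hs1 k]) (by linarith [hdT k hk])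
  have hTc : 0 ≤ ∑ k ∈ Tᶜ, s k * (c - d k) :=
    sum_nonneg fun k hk => mul_nonneg (hs0 k) (by linarith [hdTc k (mem_compl.1 hk)])
  simp only [mul_sub, sub_mul, one_mul, sum_sub_distrib, ← sum_mul, sum_const, nsmul_eq_mul]
    at hT hTc
  linarith [sum_add_sum_compl T fun k => s k * d k, congrArg (· * c) hmass]

namespace Matrix

variable {ι : Type*} [Fintype ι] [DecidableEq ι]

theorem sum_normSq_row_of_mem_unitaryGroup {W : Matrix ι ι ℂ} (hW : W ∈ unitaryGroup ι ℂ)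
    (j : ι) : ∑ k, Complex.normSq (W j k) = 1 := by
  have h := congrFun (congrFun (mem_unitaryGroup_iff.mp hW) j) j
  rw [star_eq_conjTranspose] at h
  simp only [mul_apply, conjTranspose_apply, one_apply_eq, Complex.star_def,
    Complex.mul_conj] at h
  exact_mod_cast h

theorem sum_normSq_col_of_mem_unitaryGroup {W : Matrix ι ι ℂ} (hW : W ∈ unitaryGroup ι ℂ)
    (k : ι) : ∑ j, Complex.normSq (W j k) = 1 := by
  simpa using sum_normSq_row_of_mem_unitaryGroup (Unitary.star_mem hW) k

theorem re_trace_conjTranspose_mul_diagonal_mul_mul_diagonal (W : Matrix ι ι ℂ) (c d : ι → ℝ) :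
    (trace (Wᴴ * diagonal (fun j => (c j : ℂ)) * W * diagonal (fun k => (d k : ℂ)))).re =
      ∑ k, (∑ j, c j * Complex.normSq (W j k)) * d k := by
  simp only [trace, diag_apply, mul_diagonal, mul_apply (M := Wᴴ * diagonal _),
    conjTranspose_apply, sum_mul, Complex.re_sum]
  refine sum_congr rfl fun k _ => sum_congr rfl fun j _ => ?_
  rw [← Complex.ofReal_re (c j * _ * d k)]
  push_cast
  rw [Complex.normSq_eq_conj_mul_self, ← Complex.star_def]
  congr 1
  ring

theorem re_trace_conjTranspose_mul_diagonal_indicator_le {W : Matrix ι ι ℂ}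
    (hW : W ∈ unitaryGroup ι ℂ) (T : Finset ι) {d : ι → ℝ} {c : ℝ}
    (hdT : ∀ k ∈ T, c ≤ d k) (hdTc : ∀ k ∉ T, d k ≤ c) :
    (trace (Wᴴ * diagonal (fun j => if j ∈ T then 1 else 0) * W *
      diagonal (fun k => (d k : ℂ)))).re ≤ ∑ k ∈ T, d k := by
  set χ : ι → ℝ := fun j => if j ∈ T then 1 else 0
  have hχ : diagonal (fun j => if j ∈ T then (1 : ℂ) else 0) = diagonal (fun j => (χ j : ℂ)) := by
    congr 1; funext j; by_cases hj : j ∈ T <;> simp [χ, hj]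
  have hχ01 : ∀ j, 0 ≤ χ j ∧ χ j ≤ 1 := fun j => by by_cases hj : j ∈ T <;> simp [χ, hj]
  rw [hχ, re_trace_conjTranspose_mul_diagonal_mul_mul_diagonal]
  refine sum_mul_le_sum_of_threshold (fun k => ?_) (fun k => ?_) ?_ hdT hdTc
  · exact sum_nonneg fun j _ => mul_nonneg (hχ01 j).1 (Complex.normSq_nonneg _)
  · calc ∑ j, χ j * Complex.normSq (W j k) ≤ ∑ j, Complex.normSq (W j k) :=
          sum_le_sum fun j _ => mul_le_of_le_one_left (Complex.normSq_nonneg _) (hχ01 j).2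
      _ = 1 := sum_normSq_col_of_mem_unitaryGroup hW k
  · rw [sum_comm]
    simp_rw [← mul_sum, sum_normSq_row_of_mem_unitaryGroup hW,
      mul_one, χ, sum_boole, filter_mem_eq_inter, univ_inter]

theorem iSup_re_trace_conjTranspose_mul_diagonal_indicator (T : Finset ι) {d : ι → ℝ} {c : ℝ}
    (hdT : ∀ k ∈ T, c ≤ d k) (hdTc : ∀ k ∉ T, d k ≤ c) :
    ⨆ W : unitaryGroup ι ℂ, (trace ((W : Matrix ι ι ℂ)ᴴ *
      diagonal (fun j => if j ∈ T then 1 else 0) * (W : Matrix ι ι ℂ) *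
      diagonal (fun k => (d k : ℂ)))).re =
      ∑ k ∈ T, d k := by
  refine ciSup_eq_of_forall_le_of_forall_lt_exists_gt
    (fun W => re_trace_conjTranspose_mul_diagonal_indicator_le W.2 T hdT hdTc)
    (fun a ha => ⟨1, ?_⟩)
  simpa [trace] using ha

theorem mul_inv_conjTranspose_mul_self_mul_conjTranspose {K l n : Type*} [Field K] [StarRing K]
    [Fintype n] [DecidableEq n] (X : Matrix l n K) {R : Matrix n n K} (hR : IsUnit R.det) :
    X * R * (Rᴴ * R)⁻¹ * (X * R)ᴴ = X * Xᴴ := by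
  have hR' : IsUnit Rᴴ.det := by rw [det_conjTranspose]; exact hR.star
  rw [Matrix.mul_inv_rev, conjTranspose_mul]
  simp only [Matrix.mul_assoc, mul_nonsing_inv_cancel_left _ _ hR,
    nonsing_inv_mul_cancel_left _ _ hR']

theorem trace_conjTranspose_mul_mul_mul_inv {K p n : Type*} [Field K] [StarRing K]
    [Fintype p] [Fintype n] [DecidableEq n]
    {B S : Matrix p n K} {V : Matrix p p K} {R : Matrix n n K}
    (hB : B = V * S * R) (hR : IsUnit R.det) (Q : Matrix p p K) :
    trace (Bᴴ * Q * B * (Rᴴ * R)⁻¹) = trace (Vᴴ * Q * V * (S * Sᴴ)) := by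
  calc trace (Bᴴ * Q * B * (Rᴴ * R)⁻¹) = trace (B * (Rᴴ * R)⁻¹ * Bᴴ * Q) := by
        rw [Matrix.mul_assoc (Bᴴ * Q) B, trace_mul_comm, ← Matrix.mul_assoc]
    _ = trace (V * (S * Sᴴ) * Vᴴ * Q) := by
        rw [hB, mul_inv_conjTranspose_mul_self_mul_conjTranspose (V * S) hR, conjTranspose_mul]
        simp only [Matrix.mul_assoc]
    _ = trace (Vᴴ * Q * V * (S * Sᴴ)) := by
        rw [trace_mul_cycle, trace_mul_cycle]
        simp only [Matrix.mul_assoc]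

theorem conjTranspose_mul_self_add_eq_of_gsvd {m p n : Type*} [Fintype m] [Fintype p]
    [DecidableEq p] [Fintype n] [DecidableEq n] {A : Matrix m n ℂ} {B S : Matrix p n ℂ}
    {V : Matrix p p ℂ} (hV : V ∈ unitaryGroup p ℂ) {R : Matrix n n ℂ} {β : n → ℝ}
    (hB : B = V * S * R) (hS : Sᴴ * S = diagonal fun l => ((β l ^ 2 : ℝ) : ℂ))
    (hAA : Aᴴ * A = Rᴴ * diagonal (fun l => ((1 - β l ^ 2 : ℝ) : ℂ)) * R) :
    Aᴴ * A + Bᴴ * B = Rᴴ * R := by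
  have hVV : Vᴴ * V = 1 := by rw [← star_eq_conjTranspose]; exact mem_unitaryGroup_iff'.mp hV
  have hBB : Bᴴ * B = Rᴴ * (Sᴴ * S) * R := by
    rw [hB]
    simp only [conjTranspose_mul, Matrix.mul_assoc, ← Matrix.mul_assoc Vᴴ V, hVV,
      Matrix.one_mul]
  rw [hAA, hBB, hS, ← Matrix.add_mul, ← Matrix.mul_add, diagonal_add]
  simp

end Matrix

section GSVD

variable {p n : ℕ}

/-- The factor `Σ_B = (0_{p×(n-p)}, diag(β_{n-p+1}, …, β_n))`, indexed from `0`. -/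
def gsvdSigma (p n : ℕ) (β : Fin n → ℝ) : Matrix (Fin p) (Fin n) ℂ :=
  of fun k l => if (l : ℕ) + p = n + k then (β l : ℂ) else 0

def gsvdIndex (hpn : p ≤ n) (k : Fin p) : Fin n := ⟨n - p + k, by omega⟩

theorem gsvdIndex_injective (hpn : p ≤ n) : Function.Injective (gsvdIndex hpn) :=
  fun k k' h => Fin.ext (by simpa [gsvdIndex, Fin.ext_iff] using h)

theorem gsvdSigma_apply (hpn : p ≤ n) (β : Fin n → ℝ) (k : Fin p) (l : Fin n) :
    gsvdSigma p n β k l = if l = gsvdIndex hpn k then (β l : ℂ) else 0 := by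
  simp only [gsvdSigma, of_apply, gsvdIndex, Fin.ext_iff]
  congr 1
  apply propext
  omega

theorem gsvdSigma_mul_conjTranspose (hpn : p ≤ n) (β : Fin n → ℝ) :
    gsvdSigma p n β * (gsvdSigma p n β)ᴴ =
      diagonal fun k => ((β (gsvdIndex hpn k) ^ 2 : ℝ) : ℂ) := by
  ext k k'
  simp only [mul_apply, conjTranspose_apply, gsvdSigma_apply hpn, diagonal_apply, ite_mul, zero_mul,
    sum_ite_eq', mem_univ, if_true, (gsvdIndex_injective hpn).eq_iff]
  split_ifs <;> simp [sq]

theorem conjTranspose_gsvdSigma_mul (β : Fin n → ℝ)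
    (hzero : ∀ l : Fin n, (l : ℕ) + p < n → β l = 0) :
    (gsvdSigma p n β)ᴴ * gsvdSigma p n β = diagonal fun l => ((β l ^ 2 : ℝ) : ℂ) := by
  ext l l'
  simp only [mul_apply, conjTranspose_apply, gsvdSigma, of_apply, diagonal_apply]
  rcases lt_or_ge ((l : ℕ) + p) n with hl | hl
  · simp [hzero l hl]
  · rw [Fintype.sum_eq_single ⟨l + p - n, by omega⟩ fun k hk => ?_]
    · have hk₀ : (l : ℕ) + p = n + (l + p - n) := by omega
      have hl' : (l' : ℕ) + p = n + (l + p - n) ↔ l = l' := by rw [Fin.ext_iff]; omega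
      rw [if_pos hk₀]
      simp only [hl']
      split_ifs with h
      · subst h; simp [sq]
      · simp
    · have : (l : ℕ) + p ≠ n + k := fun h => hk (Fin.ext (by simp; omega))
      simp [this]

theorem sum_filter_gsvdIndex {M : Type*} [AddCommMonoid M] (hpn : p ≤ n) (f : Fin n → M)
    {i : Fin n} (hip : n ≤ p + i) :
    ∑ k ∈ univ.filter (fun k : Fin p => p + (i : ℕ) ≤ k + n), f (gsvdIndex hpn k) =
      ∑ l ∈ Ici i, f l := by
  rw [← sum_image fun k _ k' _ h => gsvdIndex_injective hpn h]
  congr 1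
  ext l
  simp only [mem_image, mem_filter, mem_univ, true_and, mem_Ici, gsvdIndex, Fin.ext_iff,
    Fin.le_def]
  constructor
  · rintro ⟨k, hk, hkl⟩
    omega
  · intro hl
    exact ⟨⟨l + p - n, by omega⟩, by simp only; omega, by simp only; omega⟩

end GSVD

theorem stmt11_general
    {m p n : ℕ} (hpn : p ≤ n)
    (A : Matrix (Fin m) (Fin n) ℂ) (B : Matrix (Fin p) (Fin n) ℂ)
    (V : Matrix (Fin p) (Fin p) ℂ) (hV : V ∈ Matrix.unitaryGroup (Fin p) ℂ)
    (R : Matrix (Fin n) (Fin n) ℂ) (hR : IsUnit R.det)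
    (β : Fin n → ℝ)
    (hβ0 : ∀ k, 0 ≤ β k) (hmono : Monotone β)
    (hzero : ∀ k : Fin n, (k : ℕ) + p < n → β k = 0)
    (hB : B = V * (Matrix.of fun (k : Fin p) (l : Fin n) =>
        if (l : ℕ) + p = n + (k : ℕ) then Complex.ofReal (β l) else 0) * R)
    (hAA : Aᴴ * A = Rᴴ * Matrix.diagonal (fun l => Complex.ofReal (1 - β l ^ 2)) * R)
    (i : Fin n) (hip : n ≤ p + (i : ℕ)) :
(⨆ Φ : Matrix.unitaryGroup (Fin p) ℂ,
      (Matrix.trace (Bᴴ * (Φ : Matrix (Fin p) (Fin p) ℂ)ᴴ *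
        Matrix.diagonal (fun k : Fin p => if p + (i : ℕ) ≤ (k : ℕ) + n then (1 : ℂ) else 0) *
        (Φ : Matrix (Fin p) (Fin p) ℂ) * B * (Aᴴ * A + Bᴴ * B)⁻¹)).re) =
      ∑ k ∈ Finset.Ici i, β k ^ 2 := by
  set T : Finset (Fin p) := univ.filter fun k => p + (i : ℕ) ≤ k + n
  set P : Matrix (Fin p) (Fin p) ℂ := diagonal fun k => if k ∈ T then 1 else 0
  set D : Matrix (Fin p) (Fin p) ℂ := diagonal fun k => ((β (gsvdIndex hpn k) ^ 2 : ℝ) : ℂ)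
  have hM : Aᴴ * A + Bᴴ * B = Rᴴ * R :=
    conjTranspose_mul_self_add_eq_of_gsvd hV hB (conjTranspose_gsvdSigma_mul β hzero) hAA
  have hP : (diagonal fun k : Fin p => if p + (i : ℕ) ≤ k + n then (1 : ℂ) else 0) = P := by
    simp [P, T]
  have hobj : ∀ Φ : Matrix (Fin p) (Fin p) ℂ,
      trace (Bᴴ * Φᴴ * P * Φ * B * (Rᴴ * R)⁻¹) = trace ((Φ * V)ᴴ * P * (Φ * V) * D) := by
    intro Φ
    have := trace_conjTranspose_mul_mul_mul_inv (S := gsvdSigma p n β) hB hR (Φᴴ * P * Φ)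
    rw [gsvdSigma_mul_conjTranspose hpn] at this
    simpa only [conjTranspose_mul, Matrix.mul_assoc] using this
  have hdT : ∀ k ∈ T, β i ^ 2 ≤ β (gsvdIndex hpn k) ^ 2 := fun k hk =>
    pow_le_pow_left₀ (hβ0 i) (hmono (by simp [T, gsvdIndex, Fin.le_def] at hk ⊢; omega)) 2
  have hdTc : ∀ k ∉ T, β (gsvdIndex hpn k) ^ 2 ≤ β i ^ 2 := fun k hk =>
    pow_le_pow_left₀ (hβ0 _) (hmono (by simp [T, gsvdIndex, Fin.le_def] at hk ⊢; omega)) 2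
  let U : unitaryGroup (Fin p) ℂ := ⟨V, hV⟩
  let f : unitaryGroup (Fin p) ℂ → ℝ := fun W =>
    (trace ((W : Matrix (Fin p) (Fin p) ℂ)ᴴ * P * (W : Matrix (Fin p) (Fin p) ℂ) * D)).re
  calc _ = ⨆ Φ, f (Φ * U) := by
        simp_rw [hP, hM, hobj]
        rfl
    _ = ⨆ W, f W := (Equiv.mulRight U).iSup_comp
    _ = ∑ k ∈ T, β (gsvdIndex hpn k) ^ 2 :=
        iSup_re_trace_conjTranspose_mul_diagonal_indicator T hdT hdTc
    _ = _ := sum_filter_gsvdIndex hpn (fun l => β l ^ 2) hip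

theorem stmt11
    {m p n : ℕ} (hpn : p ≤ n)
    (A : Matrix (Fin m) (Fin n) ℂ) (B : Matrix (Fin p) (Fin n) ℂ)
    (hrank : (Matrix.fromRows A B).rank = n)
    (V : Matrix (Fin p) (Fin p) ℂ) (hV : V ∈ Matrix.unitaryGroup (Fin p) ℂ)
    (R : Matrix (Fin n) (Fin n) ℂ) (hR : IsUnit R.det)
    (β : Fin n → ℝ)
    (hβ0 : ∀ k, 0 ≤ β k) (hβ1 : ∀ k, β k ≤ 1) (hmono : Monotone β)
    (hzero : ∀ k : Fin n, (k : ℕ) + p < n → β k = 0)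
    (hB : B = V * (Matrix.of fun (k : Fin p) (l : Fin n) =>
        if (l : ℕ) + p = n + (k : ℕ) then Complex.ofReal (β l) else 0) * R)
    (hAA : Aᴴ * A = Rᴴ * Matrix.diagonal (fun l => Complex.ofReal (1 - β l ^ 2)) * R)
    (i : Fin n) (hip : n ≤ p + (i : ℕ)) :
(⨆ Φ : Matrix.unitaryGroup (Fin p) ℂ,
      (Matrix.trace (Bᴴ * (Φ : Matrix (Fin p) (Fin p) ℂ)ᴴ *
        Matrix.diagonal (fun k : Fin p => if p + (i : ℕ) ≤ (k : ℕ) + n then (1 : ℂ) else 0) *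
        (Φ : Matrix (Fin p) (Fin p) ℂ) * B * (Aᴴ * A + Bᴴ * B)⁻¹)).re) =
      ∑ k ∈ Finset.Ici i, β k ^ 2 :=
  stmt11_general hpn A B V hV R hR β hβ0 hmono hzero hB hAA i hip
end

section
/- Let n ≤ m and let {A,B} be an (m,p,n)-GMP with GSVD as in the context, with generalized singular values (αᵢ, βᵢ). Then for every 1 ≤ i ≤ n, max_{Π₁ ∈ 𝕌_m, Π₂ ∈ 𝕌_n} |tr(Π₁ A (AᴴA + BᴴB)^{-1/2} Π₂ 𝒢_i)| = α₁ + α₂ + ⋯ + αᵢ. -/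
/-!
Since `S² = AᴴA + BᴴB = RᴴR`, the matrix `Q := R S⁻¹` is unitary and `A S⁻¹ = U Σ_A Q`, so the
quantity to maximise is `|tr (V Σ_A W 𝒢)|` over unitary `V`, `W`. That trace is `∑ₗ αₗ cₗ`, where
Cauchy–Schwarz on the rows and columns of `V` and `W` gives `|cₗ| ≤ 1` and `∑ₗ |cₗ| ≤ rank 𝒢`;
for a nonincreasing `α` such weights yield at most the sum of the first `rank 𝒢` values of `α`.
The bound is attained at `V = Uᴴ`, `W = Qᴴ`.
-/

open Matrix Finset
open scoped ComplexOrder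

theorem sum_mul_le_sum_Iic_of_antitone {ι : Type*} [Fintype ι] [LinearOrder ι]
    [LocallyFiniteOrderBot ι] {α d : ι → ℝ} {i : ι} (hα0 : 0 ≤ α i) (hα : Antitone α)
    (hd0 : ∀ l, 0 ≤ d l) (hd1 : ∀ l, d l ≤ 1) (hsum : ∑ l, d l ≤ #(Iic i)) :
    ∑ l, α l * d l ≤ ∑ k ∈ Iic i, α k := by
  have termwise : ∀ l, α l * d l - (if l ≤ i then α l else 0)
      ≤ α i * (d l - if l ≤ i then 1 else 0) := fun l => by
    split_ifs with hl
    · nlinarith [hα hl, hd1 l]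
    · nlinarith [hα (le_of_not_ge hl), hd0 l]
  have hIic : ∀ f : ι → ℝ, ∑ l, (if l ≤ i then f l else 0) = ∑ k ∈ Iic i, f k := fun f => by
    rw [← sum_filter, filter_ge_eq_Iic]
  have := sum_le_sum fun l (_ : l ∈ univ) => termwise l
  rw [sum_sub_distrib, ← mul_sum, sum_sub_distrib, hIic, hIic] at this
  simp only [sum_const, nsmul_eq_mul, mul_one] at this
  nlinarith

theorem sum_mul_le_one_of_sum_sq_le_one {ι : Type*} {s : Finset ι} {a b : ι → ℝ}
    (ha : ∑ j ∈ s, a j ^ 2 ≤ 1) (hb : ∑ j ∈ s, b j ^ 2 ≤ 1) : ∑ j ∈ s, a j * b j ≤ 1 :=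
  (Real.sum_mul_le_sqrt_mul_sqrt s a b).trans <|
    mul_le_one₀ (Real.sqrt_le_one.mpr ha) (Real.sqrt_nonneg _) (Real.sqrt_le_one.mpr hb)

theorem sum_comp_le_sum_of_injective {ι κ : Type*} [Fintype κ] {e : ι → κ}
    (he : Function.Injective e) (s : Finset ι) {f : κ → ℝ} (hf : ∀ k, 0 ≤ f k) :
    ∑ j ∈ s, f (e j) ≤ ∑ k, f k := by
  classical
  rw [← sum_image fun x _ y _ h => he h]
  exact sum_le_univ_sum_of_nonneg hf

theorem ciSup_eq_of_forall_le_of_eq {α ι : Type*} [ConditionallyCompleteLattice α] {f : ι → α}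
    {c : α} (h : ∀ i, f i ≤ c) (i₀ : ι) (h₀ : f i₀ = c) : ⨆ i, f i = c :=
  IsGreatest.csSup_eq ⟨⟨i₀, h₀⟩, by rintro _ ⟨i, rfl⟩; exact h i⟩

namespace Matrix

section Unitary

variable {𝕜 ι κ : Type*} [RCLike 𝕜] [Fintype κ] [DecidableEq κ] {U : Matrix κ κ 𝕜}

theorem sum_norm_sq_row_of_mem_unitaryGroup (hU : U ∈ unitaryGroup κ 𝕜) (r : κ) :
    ∑ c, ‖U r c‖ ^ 2 = 1 := by
  have h : (U * Uᴴ) r r = 1 := by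
    rw [← star_eq_conjTranspose, Unitary.mul_star_self_of_mem hU, one_apply_eq]
  simp only [mul_apply, conjTranspose_apply, ← starRingEnd_apply, RCLike.mul_conj] at h
  exact_mod_cast h

theorem sum_norm_sq_col_of_mem_unitaryGroup (hU : U ∈ unitaryGroup κ 𝕜) (c : κ) :
    ∑ r, ‖U r c‖ ^ 2 = 1 := by
  simpa using sum_norm_sq_row_of_mem_unitaryGroup (Unitary.star_mem hU) c

theorem sum_norm_sq_row_le_one_of_mem_unitaryGroup (hU : U ∈ unitaryGroup κ 𝕜) {e : ι → κ}
    (he : Function.Injective e) (s : Finset ι) (r : κ) : ∑ j ∈ s, ‖U r (e j)‖ ^ 2 ≤ 1 :=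
  (sum_comp_le_sum_of_injective he s fun _ => sq_nonneg _).trans_eq
    (sum_norm_sq_row_of_mem_unitaryGroup hU r)

theorem sum_norm_sq_col_le_one_of_mem_unitaryGroup (hU : U ∈ unitaryGroup κ 𝕜) {e : ι → κ}
    (he : Function.Injective e) (s : Finset ι) (c : κ) : ∑ j ∈ s, ‖U (e j) c‖ ^ 2 ≤ 1 :=
  (sum_comp_le_sum_of_injective he s fun _ => sq_nonneg _).trans_eq
    (sum_norm_sq_col_of_mem_unitaryGroup hU c)

end Unitary

theorem mul_inv_mem_unitaryGroup_of_mul_self_eq {ι 𝕜 : Type*} [Fintype ι] [DecidableEq ι]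
    [CommRing 𝕜] [StarRing 𝕜] {S R : Matrix ι ι 𝕜} (hS : S.IsHermitian) (hSdet : IsUnit S.det)
    (h : S * S = Rᴴ * R) : R * S⁻¹ ∈ unitaryGroup ι 𝕜 := by
  rw [mem_unitaryGroup_iff', star_eq_conjTranspose, conjTranspose_mul, conjTranspose_nonsing_inv,
    hS.eq]
  calc S⁻¹ * Rᴴ * (R * S⁻¹) = S⁻¹ * (Rᴴ * R) * S⁻¹ := by simp only [Matrix.mul_assoc]
    _ = (S⁻¹ * S) * (S * S⁻¹) := by rw [← h]; simp only [Matrix.mul_assoc]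
    _ = 1 := by rw [nonsing_inv_mul _ hSdet, mul_nonsing_inv _ hSdet, one_mul]

section RectDiagonal

variable {R : Type*} {m n : ℕ}

/-- `rectDiagonal m d` is the paper's `Σ_A`, and `truncatedIdentity R m i` is `𝒢_{i+1}`: the
index `i : Fin n` counts from `0`. -/
def rectDiagonal [Zero R] (m : ℕ) (d : Fin n → R) : Matrix (Fin m) (Fin n) R :=
  of fun k l => if (k : ℕ) = l then d l else 0

variable (R) in
def truncatedIdentity [Zero R] [One R] (m : ℕ) (i : Fin n) : Matrix (Fin n) (Fin m) R :=
  of fun k l => if (k : ℕ) = l ∧ (k : ℕ) ≤ i then 1 else 0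

theorem mul_rectDiagonal_apply [Semiring R] (hnm : n ≤ m) {ι : Type*} (V : Matrix ι (Fin m) R)
    (d : Fin n → R) (r : ι) (l : Fin n) :
    (V * rectDiagonal m d) r l = V r (Fin.castLE hnm l) * d l := by
  rw [mul_apply, sum_eq_single (Fin.castLE hnm l)]
  · simp [rectDiagonal]
  · intro k _ hk
    have : (k : ℕ) ≠ l := fun h => hk (Fin.ext h)
    simp [rectDiagonal, this]
  · simp

theorem conjTranspose_rectDiagonal_mul_self [Semiring R] [StarRing R] (hnm : n ≤ m)
    (d : Fin n → R) :
    (rectDiagonal m d)ᴴ * rectDiagonal m d = diagonal fun l => star (d l) * d l := by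
  ext r l
  rw [mul_rectDiagonal_apply hnm, conjTranspose_apply, diagonal_apply]
  by_cases h : r = l
  · simp [rectDiagonal, h]
  · have : (l : ℕ) ≠ r := fun h' => h (Fin.ext h'.symm)
    simp [rectDiagonal, h, this]

theorem trace_mul_truncatedIdentity [CommSemiring R] (hnm : n ≤ m) (X : Matrix (Fin m) (Fin n) R)
    (i : Fin n) :
    trace (X * truncatedIdentity R m i) = ∑ j ∈ Iic i, X (Fin.castLE hnm j) j := by
  have hdiag : ∀ j, (truncatedIdentity R m i * X).diag j =
      if j ≤ i then X (Fin.castLE hnm j) j else 0 := fun j => by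
    rw [diag_apply, mul_apply, sum_eq_single (Fin.castLE hnm j)]
    · simp only [truncatedIdentity, of_apply, Fin.val_castLE, true_and, ← Fin.le_def]
      split_ifs <;> simp
    · intro k _ hk
      have : (j : ℕ) ≠ k := fun h => hk (Fin.ext h.symm)
      simp [truncatedIdentity, this]
    · simp
  rw [trace_mul_comm, trace, sum_congr rfl fun j _ => hdiag j, ← sum_filter, filter_ge_eq_Iic]

theorem trace_rectDiagonal_mul_truncatedIdentity [CommSemiring R] (hnm : n ≤ m) (d : Fin n → R)
    (i : Fin n) :
    trace (rectDiagonal m d * truncatedIdentity R m i) = ∑ j ∈ Iic i, d j := by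
  rw [trace_mul_truncatedIdentity hnm]
  simp [rectDiagonal]

theorem trace_mul_rectDiagonal_mul_truncatedIdentity [CommSemiring R] (hnm : n ≤ m)
    (V : Matrix (Fin m) (Fin m) R) (d : Fin n → R) (W : Matrix (Fin n) (Fin n) R) (i : Fin n) :
    trace (V * rectDiagonal m d * W * truncatedIdentity R m i) =
      ∑ l, d l * ∑ j ∈ Iic i, V (Fin.castLE hnm j) (Fin.castLE hnm l) * W l j := by
  simp only [trace_mul_truncatedIdentity hnm, mul_apply (M := V * rectDiagonal m d),
    mul_rectDiagonal_apply hnm, mul_sum]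
  rw [sum_comm]
  exact sum_congr rfl fun l _ => sum_congr rfl fun j _ => by ring

end RectDiagonal

theorem conjTranspose_mul_self_add_eq_of_gsvd_s12 {𝕜 : Type*} [RCLike 𝕜] {m p n : ℕ} (hnm : n ≤ m)
    {A : Matrix (Fin m) (Fin n) 𝕜} {B : Matrix (Fin p) (Fin n) 𝕜} {U : Matrix (Fin m) (Fin m) 𝕜}
    {R : Matrix (Fin n) (Fin n) 𝕜} {α : Fin n → ℝ} (hU : U ∈ unitaryGroup (Fin m) 𝕜)
    (hA : A = U * rectDiagonal m (fun l => (α l : 𝕜)) * R)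
    (hBB : Bᴴ * B = Rᴴ * diagonal (fun l => ((1 - α l ^ 2 : ℝ) : 𝕜)) * R) :
    Aᴴ * A + Bᴴ * B = Rᴴ * R := by
  set D := rectDiagonal m fun l => (α l : 𝕜)
  have hAA : Aᴴ * A = Rᴴ * diagonal (fun l => ((α l ^ 2 : ℝ) : 𝕜)) * R :=
    calc Aᴴ * A = Rᴴ * (Dᴴ * (star U * U) * D) * R := by
          rw [hA, conjTranspose_mul, conjTranspose_mul, star_eq_conjTranspose]
          simp only [Matrix.mul_assoc]
      _ = _ := by
          rw [Unitary.star_mul_self_of_mem hU, Matrix.mul_one,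
            conjTranspose_rectDiagonal_mul_self hnm]
          congr 3; funext l; simp [sq]
  rw [hAA, hBB, ← Matrix.add_mul, ← Matrix.mul_add, diagonal_add]
  simp

theorem norm_trace_mul_rectDiagonal_mul_truncatedIdentity_le {𝕜 : Type*} [RCLike 𝕜]
    {m n : ℕ} (hnm : n ≤ m) {α : Fin n → ℝ} (hα0 : ∀ k, 0 ≤ α k) (hα : Antitone α) (i : Fin n)
    {V : Matrix (Fin m) (Fin m) 𝕜} (hV : V ∈ unitaryGroup (Fin m) 𝕜)
    {W : Matrix (Fin n) (Fin n) 𝕜} (hW : W ∈ unitaryGroup (Fin n) 𝕜) :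
    ‖trace (V * rectDiagonal m (fun l => (α l : 𝕜)) * W * truncatedIdentity 𝕜 m i)‖ ≤
      ∑ k ∈ Iic i, α k := by
  set ι := Fin.castLE hnm
  have hι : Function.Injective ι := Fin.castLE_injective hnm
  set c : Fin n → 𝕜 := fun l => ∑ j ∈ Iic i, V (ι j) (ι l) * W l j
  set e : Fin n → ℝ := fun l => ∑ j ∈ Iic i, ‖V (ι j) (ι l)‖ * ‖W l j‖
  have hce : ∀ l, ‖c l‖ ≤ e l := fun l =>
    (norm_sum_le _ _).trans_eq (sum_congr rfl fun j _ => norm_mul _ _)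
  have he1 : ∀ l, e l ≤ 1 := fun l => sum_mul_le_one_of_sum_sq_le_one
    (sum_norm_sq_col_le_one_of_mem_unitaryGroup hV hι _ _)
    (sum_norm_sq_row_le_one_of_mem_unitaryGroup hW Function.injective_id _ l)
  have hesum : ∑ l, e l ≤ #(Iic i) :=
    calc ∑ l, e l = ∑ j ∈ Iic i, ∑ l, ‖V (ι j) (ι l)‖ * ‖W l j‖ := sum_comm
      _ ≤ ∑ _j ∈ Iic i, (1 : ℝ) := sum_le_sum fun j _ => sum_mul_le_one_of_sum_sq_le_one
          (sum_norm_sq_row_le_one_of_mem_unitaryGroup hV hι _ _)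
          (sum_norm_sq_col_of_mem_unitaryGroup hW j).le
      _ = #(Iic i) := by simp
  rw [trace_mul_rectDiagonal_mul_truncatedIdentity hnm]
  calc ‖∑ l, (α l : 𝕜) * c l‖ ≤ ∑ l, α l * ‖c l‖ := (norm_sum_le _ _).trans_eq <|
        sum_congr rfl fun l _ => by rw [norm_mul, RCLike.norm_ofReal, abs_of_nonneg (hα0 l)]
    _ ≤ ∑ k ∈ Iic i, α k := sum_mul_le_sum_Iic_of_antitone (hα0 i) hα (fun l => norm_nonneg _)
        (fun l => (hce l).trans (he1 l)) ((sum_le_sum fun l _ => hce l).trans hesum)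

end Matrix

theorem stmt12_general
    {m p n : ℕ} (hnm : n ≤ m)
    (A : Matrix (Fin m) (Fin n) ℂ) (B : Matrix (Fin p) (Fin n) ℂ)
    (U : Matrix (Fin m) (Fin m) ℂ) (hU : U ∈ Matrix.unitaryGroup (Fin m) ℂ)
    (R : Matrix (Fin n) (Fin n) ℂ)
    (α : Fin n → ℝ)
    (hα0 : ∀ k, 0 ≤ α k) (hmono : Antitone α)
    (hA : A = U * (Matrix.of fun (k : Fin m) (l : Fin n) =>
        if (k : ℕ) = (l : ℕ) then Complex.ofReal (α l) else 0) * R)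
    (hBB : Bᴴ * B = Rᴴ * Matrix.diagonal (fun l => Complex.ofReal (1 - α l ^ 2)) * R)
    (S : Matrix (Fin n) (Fin n) ℂ) (hS : S.PosDef)
    (hSsq : S * S = Aᴴ * A + Bᴴ * B)
    (i : Fin n) :
(⨆ W1 : Matrix.unitaryGroup (Fin m) ℂ, ⨆ W2 : Matrix.unitaryGroup (Fin n) ℂ,
      ‖(Matrix.trace ((W1 : Matrix (Fin m) (Fin m) ℂ) * A * S⁻¹ *
        (W2 : Matrix (Fin n) (Fin n) ℂ) *
        Matrix.of (fun (k : Fin n) (l : Fin m) =>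
          if (k : ℕ) = (l : ℕ) ∧ (k : ℕ) ≤ (i : ℕ) then (1 : ℂ) else 0)))‖) =
      ∑ k ∈ Finset.Iic i, α k := by
  change A = U * rectDiagonal m (fun l => (α l : ℂ)) * R at hA
  change ⨆ W1 : unitaryGroup (Fin m) ℂ, ⨆ W2 : unitaryGroup (Fin n) ℂ,
    ‖trace ((W1 : Matrix (Fin m) (Fin m) ℂ) * A * S⁻¹ * (W2 : Matrix (Fin n) (Fin n) ℂ) *
      truncatedIdentity ℂ m i)‖ = _
  have hQ : R * S⁻¹ ∈ unitaryGroup (Fin n) ℂ :=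
    mul_inv_mem_unitaryGroup_of_mul_self_eq hS.isHermitian
      ((isUnit_iff_isUnit_det S).mp hS.isUnit)
      (hSsq.trans (conjTranspose_mul_self_add_eq_of_gsvd_s12 hnm hU hA hBB))
  have hAS : ∀ (V : Matrix (Fin m) (Fin m) ℂ) W, V * A * S⁻¹ * W =
      V * U * rectDiagonal m (fun l => (α l : ℂ)) * (R * S⁻¹ * W) := fun V W => by
    rw [hA]; simp only [Matrix.mul_assoc]
  have hbound : ∀ (W1 : unitaryGroup (Fin m) ℂ) (W2 : unitaryGroup (Fin n) ℂ),
      ‖trace ((W1 : Matrix (Fin m) (Fin m) ℂ) * A * S⁻¹ * (W2 : Matrix (Fin n) (Fin n) ℂ) *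
        truncatedIdentity ℂ m i)‖ ≤ ∑ k ∈ Iic i, α k := fun W1 W2 => by
    rw [hAS]
    exact norm_trace_mul_rectDiagonal_mul_truncatedIdentity_le hnm hα0 hmono i
      (mul_mem W1.2 hU) (mul_mem hQ W2.2)
  have hattain : ‖trace (star U * A * S⁻¹ * star (R * S⁻¹) * truncatedIdentity ℂ m i)‖ =
      ∑ k ∈ Iic i, α k := by
    rw [hAS, Unitary.star_mul_self_of_mem hU, Unitary.mul_star_self_of_mem hQ, Matrix.one_mul,
      Matrix.mul_one, trace_rectDiagonal_mul_truncatedIdentity hnm, ← Complex.ofReal_sum,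
      Complex.norm_real, Real.norm_of_nonneg (sum_nonneg fun k _ => hα0 k)]
  refine ciSup_eq_of_forall_le_of_eq (fun W1 => ciSup_le (hbound W1))
    ⟨star U, Unitary.star_mem hU⟩ ?_
  exact ciSup_eq_of_forall_le_of_eq (hbound _) ⟨_, Unitary.star_mem hQ⟩ hattain

theorem stmt12
    {m p n : ℕ} (hnm : n ≤ m)
    (A : Matrix (Fin m) (Fin n) ℂ) (B : Matrix (Fin p) (Fin n) ℂ)
    (hrank : (Matrix.fromRows A B).rank = n)
    (U : Matrix (Fin m) (Fin m) ℂ) (hU : U ∈ Matrix.unitaryGroup (Fin m) ℂ)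
    (R : Matrix (Fin n) (Fin n) ℂ) (hR : IsUnit R.det)
    (α : Fin n → ℝ)
    (hα0 : ∀ k, 0 ≤ α k) (hα1 : ∀ k, α k ≤ 1) (hmono : Antitone α)
    (hA : A = U * (Matrix.of fun (k : Fin m) (l : Fin n) =>
        if (k : ℕ) = (l : ℕ) then Complex.ofReal (α l) else 0) * R)
    (hBB : Bᴴ * B = Rᴴ * Matrix.diagonal (fun l => Complex.ofReal (1 - α l ^ 2)) * R)
    (S : Matrix (Fin n) (Fin n) ℂ) (hS : S.PosDef)
    (hSsq : S * S = Aᴴ * A + Bᴴ * B)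
    (i : Fin n) :
(⨆ W1 : Matrix.unitaryGroup (Fin m) ℂ, ⨆ W2 : Matrix.unitaryGroup (Fin n) ℂ,
      ‖(Matrix.trace ((W1 : Matrix (Fin m) (Fin m) ℂ) * A * S⁻¹ *
        (W2 : Matrix (Fin n) (Fin n) ℂ) *
        Matrix.of (fun (k : Fin n) (l : Fin m) =>
          if (k : ℕ) = (l : ℕ) ∧ (k : ℕ) ≤ (i : ℕ) then (1 : ℂ) else 0)))‖) =
      ∑ k ∈ Finset.Iic i, α k :=
  stmt12_general hnm A B U hU R α hα0 hmono hA hBB S hS hSsq i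
end
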